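/- arXiv:1709.08433 — 2 statements merged into one kernel-verified Lean document; each statement's English description precedes it below -/
import Mathlib

section
/- Let n ≥ 1 and s ≥ 1 be integers, k ≥ 1 an integer with k ≤ s − 1, and p ∈ (0,1). Then the probability that α_k(𝔾(n,p)) ≥ s is at most C(n,s) · C(C(s,2), ⌊ks/2⌋) · (1−p)^{C(s,2) − ⌊ks/2⌋}, where C(a,b) denotes the binomial coefficient. -/
/-- The star graph `K_{1,r}`: one center (vertex `0`) joined to `r` leaves. -/
def starGraph (r : ℕ) : SimpleGraph (Fin (r + 1)) where
  Adj u v := u ≠ v ∧ (u = 0 ∨ v = 0)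
  symm := by constructor; intro u v h; exact ⟨h.1.symm, h.2.symm⟩
  loopless := by constructor; intro u h; exact h.1 rfl

/-- `F` is contained in `G` as a subgraph, i.e. `G` has a copy of `F`. -/
def ContainsCopy {α β : Type*} (F : SimpleGraph α) (G : SimpleGraph β) : Prop :=
  ∃ f : F →g G, Function.Injective f

/-- `H` is an `F`-saturated subgraph of `G`: it is a spanning subgraph of `G` (same vertex
set, `H ≤ G`), it is `F`-free, and adding any edge of `G` missing from `H` creates a copy
of `F`. -/
def IsSatSubgraph {V α : Type*} (G : SimpleGraph V) (F : SimpleGraph α)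
    (H : SimpleGraph V) : Prop :=
  H ≤ G ∧ ¬ ContainsCopy F H ∧
    ∀ u v : V, G.Adj u v → ¬ H.Adj u v →
      ContainsCopy F (H ⊔ SimpleGraph.fromEdgeSet {s(u, v)})

/-- `sat(G, F)`: the minimum number of edges of an `F`-saturated subgraph of `G`. -/
noncomputable def satNum {V α : Type*} (G : SimpleGraph V) (F : SimpleGraph α) : ℕ :=
  sInf {m | ∃ H : SimpleGraph V, IsSatSubgraph G F H ∧ H.edgeSet.ncard = m}

/-- `S` is `k`-independent in `G`: the induced subgraph `G[S]` has maximum degree at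
most `k`, i.e. every vertex of `S` has at most `k` neighbours inside `S`. -/
def IsKIndepSet {V : Type*} (G : SimpleGraph V) (k : ℕ) (S : Set V) : Prop :=
  ∀ v ∈ S, (S ∩ G.neighborSet v).ncard ≤ k

/-- `α_k(G)`: the maximum cardinality of a `k`-independent set in `G`. -/
noncomputable def kIndepNum {V : Type*} (G : SimpleGraph V) (k : ℕ) : ℕ :=
  sSup {m | ∃ S : Set V, IsKIndepSet G k S ∧ S.ncard = m}

/-- `α(G)`: the independence number of `G`. -/
noncomputable def indepNum {V : Type*} (G : SimpleGraph V) : ℕ :=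
  sSup {m | ∃ S : Set V, (∀ u ∈ S, ∀ v ∈ S, ¬ G.Adj u v) ∧ S.ncard = m}

/-- The probability, under the Erdős–Rényi random graph `𝔾(n, p)`, that the sampled graph
lies in the set `A`; each labelled graph `G` on the vertex set `{1, …, n}` is sampled
with probability `p ^ e(G) * (1 - p) ^ (C(n,2) - e(G))`. -/
noncomputable def gnpProb (n : ℕ) (p : ℝ) (A : Set (SimpleGraph (Fin n))) : ℝ :=
  ∑ G : SimpleGraph (Fin n),
    A.indicator (fun G => p ^ G.edgeSet.ncard * (1 - p) ^ (n.choose 2 - G.edgeSet.ncard)) G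

/-!
If `α_k(G) ≥ s`, some `s`-set `S` is `k`-independent, so by the handshake lemma `G[S]` has
at most `⌊ks/2⌋` edges, and at least `c = C(s,2) - ⌊ks/2⌋` pairs inside `S` are non-edges.
The event is therefore covered by the events "all pairs of `T` are non-edges", indexed by an
`s`-set `S` and a `c`-set `T` of pairs inside `S`. Each has probability `(1-p)^c`, and a union
bound over the `C(n,s) · C(C(s,2), c)` indices gives the claim, as
`C(C(s,2), c) = C(C(s,2), ⌊ks/2⌋)` when `k ≤ s - 1`.
-/

open Finset SimpleGraph

section KIndependence

variable {V : Type*}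

lemma IsKIndepSet.mono {G : SimpleGraph V} {k : ℕ} {S T : Set V} (hT : IsKIndepSet G k T)
    (hST : S ⊆ T) (hfin : T.Finite) : IsKIndepSet G k S := fun v hv =>
  (Set.ncard_le_ncard (Set.inter_subset_inter_left _ hST) (hfin.inter_of_left _)).trans
    (hT v (hST hv))

lemma exists_isKIndepSet_card_eq [Finite V] {G : SimpleGraph V} {k s : ℕ}
    (hs : s ≤ kIndepNum G k) : ∃ S : Finset V, #S = s ∧ IsKIndepSet G k S := by
  set sizes := {m | ∃ S : Set V, IsKIndepSet G k S ∧ S.ncard = m}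
  have hne : sizes.Nonempty := ⟨0, ∅, by simp [IsKIndepSet]⟩
  have hbdd : BddAbove sizes :=
    ⟨Nat.card V, by rintro _ ⟨S, -, rfl⟩; exact Set.ncard_le_card S⟩
  obtain ⟨T, hT, hTcard⟩ := Nat.sSup_mem hne hbdd
  obtain ⟨S, hST, hScard⟩ := Finset.exists_subset_card_eq (s := T.toFinite.toFinset) (n := s)
    (by rwa [← Set.ncard_eq_toFinset_card, hTcard])
  exact ⟨S, hScard, hT.mono (by simpa using hST) T.toFinite⟩

end KIndependence

section EdgesWithin

variable {V : Type*} [Fintype V]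

lemma two_mul_card_edgeFinset_le_of_degree_le {H : SimpleGraph V} [DecidableRel H.Adj] {k : ℕ}
    (h : ∀ v, H.degree v ≤ k) : 2 * #H.edgeFinset ≤ k * Fintype.card V :=
  calc 2 * #H.edgeFinset = ∑ v, H.degree v := H.sum_degrees_eq_twice_card_edges.symm
    _ ≤ ∑ _v : V, k := sum_le_sum fun v _ => h v
    _ = k * Fintype.card V := by rw [sum_const, smul_eq_mul, card_univ, mul_comm]

variable [DecidableEq V] {G : SimpleGraph V} [DecidableRel G.Adj] {k : ℕ} {S : Finset V}

lemma card_edgeFinset_inter_sym2 (S : Finset V) :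
    #(G.edgeFinset ∩ S.sym2) = #(G.induce (S : Set V)).edgeFinset := by
  -- `convert` reconciles the two `Fintype ↥S` instances (via `Finset` and via `Set.toFinset`).
  convert (congrArg card (map_edgeFinset_induce (G := G) (s := (S : Set V)))).symm using 1
  · simp
  · rw [card_map]
    congr!

lemma card_edgeFinset_top_inter_sym2 (S : Finset V) :
    #((⊤ : SimpleGraph V).edgeFinset ∩ S.sym2) = (#S).choose 2 := by
  rw [card_edgeFinset_inter_sym2]
  convert card_edgeFinset_top_eq_card_choose_two (V := (S : Set V)) using 2
  · congr!; exact induce_top _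
  · simp

lemma IsKIndepSet.degree_induce_le (hS : IsKIndepSet G k S) (v : (S : Set V)) :
    (G.induce (S : Set V)).degree v ≤ k := by
  have hmap := congrArg card (map_neighborFinset_induce (G := G) (s := (S : Set V)) v)
  rw [card_map, card_neighborFinset_eq_degree] at hmap
  convert_to #(G.neighborFinset v ∩ (S : Set V).toFinset) ≤ k
  · convert hmap
  rw [← Set.ncard_coe_finset]
  simpa [Set.inter_comm] using hS v v.2

lemma IsKIndepSet.two_mul_card_edgeFinset_inter_sym2_le (hS : IsKIndepSet G k S) :
    2 * #(G.edgeFinset ∩ S.sym2) ≤ k * #S := by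
  rw [card_edgeFinset_inter_sym2, ← Fintype.card_coe S]
  exact two_mul_card_edgeFinset_le_of_degree_le hS.degree_induce_le

lemma IsKIndepSet.choose_two_sub_le_card_nonedges (hS : IsKIndepSet G k S) :
    (#S).choose 2 - k * #S / 2 ≤
      #(((⊤ : SimpleGraph V).edgeFinset ∩ S.sym2) \ G.edgeFinset) := by
  have hedges := hS.two_mul_card_edgeFinset_inter_sym2_le
  have hsplit :=
    card_sdiff_add_card_inter ((⊤ : SimpleGraph V).edgeFinset ∩ S.sym2) G.edgeFinset
  have hinter :
      (⊤ : SimpleGraph V).edgeFinset ∩ S.sym2 ∩ G.edgeFinset = G.edgeFinset ∩ S.sym2 := by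
    rw [inter_right_comm, inter_eq_right.2 (edgeFinset_mono le_top), inter_comm]
  rw [hinter, card_edgeFinset_top_inter_sym2] at hsplit
  omega

lemma exists_nonedges_of_le_kIndepNum {s : ℕ} (hs : s ≤ kIndepNum G k) :
    ∃ S : Finset V, #S = s ∧ ∃ T ⊆ (⊤ : SimpleGraph V).edgeFinset ∩ S.sym2,
      #T = s.choose 2 - k * s / 2 ∧ Disjoint T G.edgeFinset := by
  obtain ⟨S, rfl, hS⟩ := exists_isKIndepSet_card_eq hs
  obtain ⟨T, hT, hTcard⟩ := exists_subset_card_eq hS.choose_two_sub_le_card_nonedges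
  exact ⟨S, rfl, T, hT.trans sdiff_subset, hTcard, disjoint_of_subset_left hT sdiff_disjoint⟩

end EdgesWithin

lemma mul_div_two_le_choose_two {k s : ℕ} (h : k ≤ s - 1) : k * s / 2 ≤ s.choose 2 := by
  rw [Nat.choose_two_right, mul_comm s]
  exact Nat.div_le_div_right (Nat.mul_le_mul_right s h)

section RandomGraph

open scoped Classical in
lemma sum_edgeFinset_eq_sum_powerset {V M : Type*} [Fintype V] [DecidableEq V]
    [AddCommMonoid M] (f : Finset (Sym2 V) → M) :
    ∑ G : SimpleGraph V, f G.edgeFinset =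
      ∑ E ∈ (⊤ : SimpleGraph V).edgeFinset.powerset, f E := by
  refine sum_nbij' (fun G => G.edgeFinset) (fun E => fromEdgeSet E) ?_ ?_ ?_ ?_ ?_
  · exact fun G _ => mem_powerset.2 (edgeFinset_mono le_top)
  · exact fun _ _ => mem_univ _
  · intro G _
    simp
  · intro E hE
    ext e
    simp only [mem_edgeFinset, edgeSet_fromEdgeSet, Set.mem_sdiff, mem_coe, and_iff_left_iff_imp]
    exact fun he => not_isDiag_of_mem_edgeFinset (mem_powerset.1 hE he)
  · exact fun _ _ => rfl

variable {n : ℕ} {p : ℝ}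

lemma gnpProb_le_sum_of_subset_biUnion {ι : Type*} (hp0 : 0 ≤ p) (hp1 : p ≤ 1)
    {A : Set (SimpleGraph (Fin n))} {W : Finset ι} {B : ι → Set (SimpleGraph (Fin n))}
    (hA : A ⊆ ⋃ i ∈ W, B i) : gnpProb n p A ≤ ∑ i ∈ W, gnpProb n p (B i) := by
  set w := fun G : SimpleGraph (Fin n) =>
    p ^ G.edgeSet.ncard * (1 - p) ^ (n.choose 2 - G.edgeSet.ncard)
  have hw : ∀ G, 0 ≤ w G := fun G => by have := sub_nonneg.2 hp1; positivity
  have hpointwise : ∀ G, A.indicator w G ≤ ∑ i ∈ W, (B i).indicator w G := by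
    intro G
    by_cases hG : G ∈ A
    · obtain ⟨i, hi, hGi⟩ := Set.mem_iUnion₂.1 (hA hG)
      rw [Set.indicator_of_mem hG, ← Set.indicator_of_mem hGi w]
      exact single_le_sum (fun j _ => Set.indicator_nonneg (fun G _ => hw G) G) hi
    · rw [Set.indicator_of_notMem hG]
      exact sum_nonneg fun j _ => Set.indicator_nonneg (fun G _ => hw G) G
  exact (sum_le_sum fun G _ => hpointwise G).trans_eq sum_comm

open scoped Classical in
lemma gnpProb_disjoint_edgeFinset {D : Finset (Sym2 (Fin n))}
    (hD : D ⊆ (⊤ : SimpleGraph (Fin n)).edgeFinset) :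
    gnpProb n p {G | Disjoint D G.edgeFinset} = (1 - p) ^ #D := by
  set K := (⊤ : SimpleGraph (Fin n)).edgeFinset
  have hK : #K = n.choose 2 := by rw [card_edgeFinset_top_eq_card_choose_two, Fintype.card_fin]
  have hDK : #(K \ D) + #D = n.choose 2 := by rw [card_sdiff_add_card_eq_card hD, hK]
  calc gnpProb n p {G | Disjoint D G.edgeFinset}
      = ∑ E ∈ K.powerset, if Disjoint D E then p ^ #E * (1 - p) ^ (n.choose 2 - #E) else 0 := by
        rw [gnpProb, ← sum_edgeFinset_eq_sum_powerset
          (fun E => if Disjoint D E then p ^ #E * (1 - p) ^ (n.choose 2 - #E) else 0)]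
        refine sum_congr rfl fun G _ => ?_
        simp [Set.indicator_apply, ← coe_edgeFinset]
    _ = ∑ E ∈ (K \ D).powerset, p ^ #E * (1 - p) ^ (#(K \ D) - #E) * (1 - p) ^ #D := by
        rw [← sum_filter]
        refine sum_congr ?_ fun E hE => ?_
        · ext E
          simp only [mem_filter, mem_powerset, subset_sdiff]
          tauto
        · have := card_le_card (mem_powerset.1 hE)
          rw [mul_assoc, ← pow_add]
          congr 2
          omega
    _ = (1 - p) ^ #D := by rw [← sum_mul, sum_pow_mul_eq_add_pow]; simp

end RandomGraph

theorem kIndepNum_random_graph_tail_general (n s k : ℕ)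
    (hks : k ≤ s - 1) (p : ℝ) (hp0 : 0 < p) (hp1 : p < 1) :
    gnpProb n p {G | s ≤ kIndepNum G k} ≤
      (n.choose s : ℝ) * ((s.choose 2).choose (k * s / 2) : ℝ)
        * (1 - p) ^ (s.choose 2 - k * s / 2) := by
  classical
  set c := s.choose 2 - k * s / 2
  set W := (powersetCard s univ).sigma fun S : Finset (Fin n) =>
    powersetCard c ((⊤ : SimpleGraph (Fin n)).edgeFinset ∩ S.sym2)
  have hcover : {G | s ≤ kIndepNum G k} ⊆ ⋃ x ∈ W, {G | Disjoint x.2 G.edgeFinset} := by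
    intro G hG
    obtain ⟨S, hS, T, hT, hTcard, hdisj⟩ := exists_nonedges_of_le_kIndepNum hG
    exact Set.mem_iUnion₂.2 ⟨⟨S, T⟩,
      mem_sigma.2 ⟨mem_powersetCard_univ.2 hS, mem_powersetCard.2 ⟨hT, hTcard⟩⟩, hdisj⟩
  have hcard : #W = n.choose s * (s.choose 2).choose c := by
    rw [card_sigma, sum_const_nat fun S hS => by
      rw [card_powersetCard, card_edgeFinset_top_inter_sym2, mem_powersetCard_univ.1 hS],
      card_powersetCard, card_univ, Fintype.card_fin]
  calc gnpProb n p {G | s ≤ kIndepNum G k}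
      ≤ ∑ x ∈ W, gnpProb n p {G | Disjoint x.2 G.edgeFinset} :=
        gnpProb_le_sum_of_subset_biUnion hp0.le hp1.le hcover
    _ = ∑ x ∈ W, (1 - p) ^ c := sum_congr rfl fun x hx => by
        obtain ⟨-, hx⟩ := mem_sigma.1 hx
        rw [← (mem_powersetCard.1 hx).2]
        exact gnpProb_disjoint_edgeFinset
          ((mem_powersetCard.1 hx).1.trans inter_subset_left)
    _ = _ := by
        rw [sum_const, nsmul_eq_mul, hcard, Nat.choose_symm (mul_div_two_le_choose_two hks)]
        push_cast
        ring

/-- Let `n ≥ 1` and `s ≥ 1` be integers, `k ≥ 1` an integer with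
`k ≤ s - 1`, and `p ∈ (0,1)`. Then the probability that `α_k(𝔾(n,p)) ≥ s` is at most
`C(n,s) · C(C(s,2), ⌊ks/2⌋) · (1-p)^(C(s,2) - ⌊ks/2⌋)`. -/
theorem kIndepNum_random_graph_tail (n s k : ℕ) (hn : 1 ≤ n) (hs : 1 ≤ s) (hk : 1 ≤ k)
    (hks : k ≤ s - 1) (p : ℝ) (hp0 : 0 < p) (hp1 : p < 1) :
    gnpProb n p {G | s ≤ kIndepNum G k} ≤
      (n.choose s : ℝ) * ((s.choose 2).choose (k * s / 2) : ℝ)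
        * (1 - p) ^ (s.choose 2 - k * s / 2) :=
  kIndepNum_random_graph_tail_general n s k hks p hp0 hp1
end

section
/- For every graph G on n vertices and every integer r ≥ 2, sat(G, K_{1,r}) ≥ (r−1)·(n − α_{r−2}(G))/2. -/
open SimpleGraph hiding starGraph

variable {V : Type*}

theorem exists_isSatSubgraph_ncard_eq_satNum {α : Type*} {G : SimpleGraph V}
    {F : SimpleGraph α} (h : ∃ H, IsSatSubgraph G F H) :
    ∃ H, IsSatSubgraph G F H ∧ H.edgeSet.ncard = satNum G F :=
  let ⟨H, hH⟩ := h
  Nat.sInf_mem (s := {m | ∃ H, IsSatSubgraph G F H ∧ H.edgeSet.ncard = m}) ⟨_, H, hH, rfl⟩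

theorem neighborSet_sup_edge_of_ne (H : SimpleGraph V) {u v c : V} (hu : c ≠ u)
    (hv : c ≠ v) : (H ⊔ edge u v).neighborSet c = H.neighborSet c := by
  ext w
  simp [edge_adj, hu, hv]

section Finite

variable [Finite V]

theorem ncard_neighborSet_sup_edge_left_le (H : SimpleGraph V) (u v : V) :
    ((H ⊔ edge u v).neighborSet u).ncard ≤ (H.neighborSet u).ncard + 1 := by
  have hsub : (H ⊔ edge u v).neighborSet u ⊆ insert v (H.neighborSet u) := by
    intro w
    simp only [neighborSet_sup, Set.mem_union, mem_neighborSet, edge_adj, Set.mem_insert_iff]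
    grind
  exact (Set.ncard_le_ncard hsub).trans (Set.ncard_insert_le _ _)

theorem containsCopy_starGraph_iff {r : ℕ} (H : SimpleGraph V) :
    ContainsCopy (starGraph r) H ↔ ∃ v, r ≤ (H.neighborSet v).ncard := by
  constructor
  · rintro ⟨f, hf⟩
    refine ⟨f 0, ?_⟩
    let leaf (i : Fin r) : H.neighborSet (f 0) :=
      ⟨f i.succ, f.map_adj ⟨(Fin.succ_ne_zero i).symm, Or.inl rfl⟩⟩
    have hleaf : Function.Injective leaf :=
      fun i j h => Fin.succ_injective r (hf (congrArg Subtype.val h))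
    simpa [Nat.card_coe_set_eq] using Nat.card_le_card_of_injective leaf hleaf
  · rintro ⟨v, hv⟩
    have := Fintype.ofFinite (H.neighborSet v)
    obtain ⟨leaf⟩ : Nonempty (Fin r ↪ H.neighborSet v) :=
      Function.Embedding.nonempty_of_card_le
        (by rwa [Fintype.card_fin, ← Nat.card_eq_fintype_card, Nat.card_coe_set_eq])
    let f : Fin (r + 1) → V := Fin.cons v fun i => leaf i
    refine ⟨⟨f, ?_⟩, Fin.cons_injective_iff.2 ⟨?_, Subtype.val_injective.comp leaf.injective⟩⟩
    · rintro a b ⟨hab, hcenter⟩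
      wlog ha : a = 0 generalizing a b
      · exact (this hab.symm hcenter.symm (hcenter.resolve_left ha)).symm
      subst ha
      obtain ⟨b, rfl⟩ := Fin.exists_succ_eq.2 hab.symm
      exact (leaf b).2
    · rintro ⟨i, hi⟩
      have hvi : H.Adj v (leaf i) := (leaf i).2
      rw [show (leaf i : V) = v from hi] at hvi
      exact H.irrefl hvi

theorem not_containsCopy_starGraph_bot {r : ℕ} (hr : 1 ≤ r) :
    ¬ ContainsCopy (starGraph r) (⊥ : SimpleGraph V) := by
  simp only [containsCopy_starGraph_iff, neighborSet_bot, Set.ncard_empty]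
  omega

theorem exists_isSatSubgraph {α : Type*} (G : SimpleGraph V) {F : SimpleGraph α}
    (hF : ¬ ContainsCopy F (⊥ : SimpleGraph V)) : ∃ H, IsSatSubgraph G F H := by
  obtain ⟨H, hH⟩ := (Set.toFinite {H : SimpleGraph V | H ≤ G ∧ ¬ ContainsCopy F H}).exists_maximal
    ⟨⊥, bot_le, hF⟩
  refine ⟨H, hH.prop.1, hH.prop.2, fun u v hadj hnadj => ?_⟩
  by_contra hfree
  exact hH.not_prop_of_gt (H.lt_sup_edge u v hadj.ne hnadj)
    ⟨sup_le hH.prop.1 ((edge_le_iff G).2 (Or.inr hadj)), hfree⟩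

theorem IsKIndepSet.ncard_le_kIndepNum {G : SimpleGraph V} {k : ℕ} {S : Set V}
    (hS : IsKIndepSet G k S) : S.ncard ≤ kIndepNum G k :=
  le_csSup ⟨Nat.card V, fun _ ⟨T, _, hT⟩ => hT ▸ Set.ncard_le_card T⟩ ⟨S, hS, rfl⟩

theorem kIndepNum_le_card (G : SimpleGraph V) (k : ℕ) : kIndepNum G k ≤ Nat.card V :=
  csSup_le' fun _ ⟨T, _, hT⟩ => hT ▸ Set.ncard_le_card T

namespace IsSatSubgraph

variable {r : ℕ} {G H : SimpleGraph V}

theorem adj_of_ncard_neighborSet_le (hH : IsSatSubgraph G (starGraph r) H) (hr : 2 ≤ r)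
    {u v : V} (hadj : G.Adj u v) (hu : (H.neighborSet u).ncard ≤ r - 2)
    (hv : (H.neighborSet v).ncard ≤ r - 2) : H.Adj u v := by
  by_contra hnadj
  obtain ⟨c, hc⟩ := (containsCopy_starGraph_iff _).1 (hH.2.2 u v hadj hnadj)
  change r ≤ ((H ⊔ edge u v).neighborSet c).ncard at hc
  by_cases hcu : c = u
  · subst hcu
    have := ncard_neighborSet_sup_edge_left_le H c v
    omega
  by_cases hcv : c = v
  · subst hcv
    have := ncard_neighborSet_sup_edge_left_le H c u
    rw [edge_comm] at this
    omega
  rw [neighborSet_sup_edge_of_ne H hcu hcv] at hc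
  exact hH.2.1 ((containsCopy_starGraph_iff H).2 ⟨c, hc⟩)

theorem isKIndepSet_setOf_ncard_neighborSet_le (hH : IsSatSubgraph G (starGraph r) H)
    (hr : 2 ≤ r) : IsKIndepSet G (r - 2) {v | (H.neighborSet v).ncard ≤ r - 2} := by
  intro v hv
  calc _ ≤ (H.neighborSet v).ncard :=
        Set.ncard_le_ncard fun u hu => hH.adj_of_ncard_neighborSet_le hr hu.2 hv hu.1
    _ ≤ r - 2 := hv

end IsSatSubgraph

end Finite

section Fintype

variable [Fintype V]

theorem sum_ncard_neighborSet (H : SimpleGraph V) :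
    ∑ v, (H.neighborSet v).ncard = 2 * H.edgeSet.ncard := by
  classical
  simp_rw [Set.ncard_eq_toFinset_card']
  exact H.sum_degrees_eq_twice_card_edges

theorem mul_ncard_setOf_lt_ncard_neighborSet_le (H : SimpleGraph V) (k : ℕ) :
    (k + 1) * {v | k < (H.neighborSet v).ncard}.ncard ≤ 2 * H.edgeSet.ncard := by
  classical
  rw [← sum_ncard_neighborSet, Set.ncard_eq_toFinset_card', Set.toFinset_ofPred, mul_comm,
    ← smul_eq_mul]
  calc _ ≤ ∑ v ∈ Finset.univ.filter fun v => k < (H.neighborSet v).ncard,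
          (H.neighborSet v).ncard :=
        Finset.card_nsmul_le_sum _ _ _ fun v hv => (Finset.mem_filter.1 hv).2
    _ ≤ _ := Finset.sum_le_sum_of_subset (Finset.filter_subset _ _)

theorem IsSatSubgraph.mul_card_sub_kIndepNum_le {r : ℕ} {G H : SimpleGraph V}
    (hH : IsSatSubgraph G (starGraph r) H) (hr : 2 ≤ r) :
    (r - 1) * (Nat.card V - kIndepNum G (r - 2)) ≤ 2 * H.edgeSet.ncard := by
  set S := {v | (H.neighborSet v).ncard ≤ r - 2}
  have hS : S.ncard ≤ _ := (hH.isKIndepSet_setOf_ncard_neighborSet_le hr).ncard_le_kIndepNum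
  have hSc : Sᶜ = {v | r - 2 < (H.neighborSet v).ncard} := by ext; simp [S]
  calc _ ≤ (r - 2 + 1) * Sᶜ.ncard := by
        have := Set.ncard_add_ncard_compl S
        gcongr <;> omega
    _ ≤ _ := hSc ▸ mul_ncard_setOf_lt_ncard_neighborSet_le H (r - 2)

end Fintype

/-- For every graph `G` on `n` vertices and every integer `r ≥ 2`,
`sat(G, K_{1,r}) ≥ (r-1)(n - α_{r-2}(G))/2`. -/
theorem sat_star_lower_bound (n r : ℕ) (hr : 2 ≤ r) (G : SimpleGraph (Fin n)) :
    ((r : ℝ) - 1) * ((n : ℝ) - (kIndepNum G (r - 2) : ℝ)) / 2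
      ≤ (satNum G (starGraph r) : ℝ) := by
  obtain ⟨H, hH, hsat⟩ := exists_isSatSubgraph_ncard_eq_satNum
    (exists_isSatSubgraph G (not_containsCopy_starGraph_bot (by omega : 1 ≤ r)))
  have hbound := hH.mul_card_sub_kIndepNum_le hr
  have hα := kIndepNum_le_card G (r - 2)
  rw [Nat.card_fin] at hbound hα
  rw [← hsat]
  have hreal : (((r - 1) * (n - kIndepNum G (r - 2)) : ℕ) : ℝ) ≤ (2 * H.edgeSet.ncard : ℕ) :=
    Nat.cast_le.2 hbound
  push_cast [Nat.cast_sub (by omega : 1 ≤ r), Nat.cast_sub hα] at hreal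
  linarith
end
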